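/- Let $E_0 > 0$, $v > 0$, $W_0 \in \mathbb{C}$ with $W_0 \neq 0$, and let $c, C_1, C_2, \rho, K > 0$. Then there exist $A > 0$ and $h_0 \in (0,1)$, depending only on $c, C_1, C_2, \rho, K$, with the following property: for every $h \in (0,h_0)$, every $E_1 \in \mathbb{C}$, every function $S$ holomorphic on $B(E_1,\rho)$ with $c \le |S'| \le C_1$ and $|S''| \le C_2$ on $B(E_1,\rho)$ and $C_0(E_1;h) = 1$, and every function $g$ holomorphic on $B(E_1,\rho)$ with $|g(E)| \le K h \log(1/h)$ on $B(E_1,\rho)$, the equation $C_0(E;h)\,(1 + g(E)) = 1$ has a solution $E$ with $|E - E_1| \le A h^2 \log(1/h)$. -/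

import Mathlib

/-!
Normalising by the pseudo-resonance `E₁`, the equation becomes
`exp (i (S E - S E₁) / h) (1 + g E) = 1`. On the circle `|E - E₁| = r` with
`r = A h² log (1/h)`, Taylor's formula and `c ≤ |S'|`, `|S''| ≤ C₂` give
`c r / 2 ≤ |S E - S E₁| ≤ h / 2` once `h` is small, so the exponent `z` has `|z| ≤ 1/2` and
`|z| ≥ c r / (2h) = 10 K h log (1/h)` for `A = 20 K / c`. Hence `|exp z - 1| ≥ |z| / 2`
dominates the perturbation `exp z · g`, and the left side minus `1` is larger on the circle
than at the centre, where it equals `g E₁`. By the minimum modulus principle it has a zero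
inside the disc.
-/

open Metric Set Filter Topology Complex

theorem Complex.exists_eq_zero_of_norm_lt_of_forall_mem_frontier {E : Type*} [NormedAddCommGroup E]
    [NormedSpace ℂ E] [Nontrivial E] {f : E → ℂ} {U : Set E} {a : E} {m : ℝ}
    (hU : Bornology.IsBounded U)
    (hf : DifferentiableOn ℂ f (closure U)) (hfrontier : ∀ z ∈ frontier U, m ≤ ‖f z‖)
    (ha : a ∈ closure U) (hfa : ‖f a‖ < m) : ∃ z ∈ closure U, f z = 0 := by
  by_contra! hne
  have hm : 0 < m := (norm_nonneg _).trans_lt hfa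
  have hinv : ‖(f a)⁻¹‖ ≤ m⁻¹ :=
    norm_le_of_forall_mem_frontier_norm_le hU (hf.inv hne).diffContOnCl
      (fun z hz => by simp only [Pi.inv_apply, norm_inv]; exact inv_anti₀ hm (hfrontier z hz)) ha
  rw [norm_inv] at hinv
  exact hfa.not_ge ((inv_le_inv₀ (norm_pos_iff.mpr (hne a ha)) hm).mp hinv)

theorem Complex.norm_div_two_le_norm_exp_sub_one {z : ℂ} (hz : ‖z‖ ≤ 1 / 2) :
    ‖z‖ / 2 ≤ ‖exp z - 1‖ := by
  have hrem := norm_exp_sub_one_sub_id_le (hz.trans (by norm_num))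
  have hsq : ‖z‖ ^ 2 ≤ ‖z‖ / 2 := by nlinarith [norm_nonneg z]
  have htri := norm_sub_le (exp z - 1) (exp z - 1 - z)
  rw [sub_sub_cancel] at htri
  linarith

theorem Complex.norm_exp_le_three {z : ℂ} (hz : ‖z‖ ≤ 1) : ‖exp z‖ ≤ 3 :=
  calc ‖exp z‖ ≤ Real.exp ‖z‖ := norm_exp_le_exp_norm z
    _ ≤ Real.exp 1 := Real.exp_le_exp.mpr hz
    _ ≤ 3 := by linarith [Real.exp_one_lt_d9]

theorem Complex.norm_div_two_sub_le_norm_exp_mul_one_add_sub_one {z w : ℂ} (hz : ‖z‖ ≤ 1 / 2) :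
    ‖z‖ / 2 - 3 * ‖w‖ ≤ ‖exp z * (1 + w) - 1‖ := by
  have hexp : ‖exp z * w‖ ≤ 3 * ‖w‖ := by
    rw [norm_mul]
    exact mul_le_mul_of_nonneg_right (norm_exp_le_three (hz.trans (by norm_num))) (norm_nonneg w)
  have htri := norm_sub_le (exp z * (1 + w) - 1) (exp z * w)
  rw [show exp z * (1 + w) - 1 - exp z * w = exp z - 1 by ring] at htri
  linarith [norm_div_two_le_norm_exp_sub_one hz]

theorem Convex.norm_image_sub_sub_smul_deriv_le {𝕜 F : Type*} [RCLike 𝕜] [NormedAddCommGroup F]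
    [NormedSpace 𝕜 F] {f : 𝕜 → F} {s : Set 𝕜} {C : ℝ} {x y : 𝕜} (hs : Convex ℝ s)
    (hf : ∀ z ∈ s, DifferentiableAt 𝕜 f z) (hf' : ∀ z ∈ s, DifferentiableAt 𝕜 (deriv f) z)
    (hC : ∀ z ∈ s, ‖deriv (deriv f) z‖ ≤ C) (hx : x ∈ s) (hy : y ∈ s) :
    ‖f y - f x - (y - x) • deriv f x‖ ≤ C * ‖y - x‖ ^ 2 := by
  set t := s ∩ closedBall x ‖y - x‖
  have hC0 : 0 ≤ C := (norm_nonneg _).trans (hC x hx)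
  have hlin (z : 𝕜) (hz : z ∈ s) :
      HasDerivAt (fun w => f w - w • deriv f x) (deriv f z - deriv f x) z := by
    simpa using (hf z hz).hasDerivAt.fun_sub ((hasDerivAt_id z).smul_const (deriv f x))
  have hbound : ∀ z ∈ t, ‖deriv (fun w => f w - w • deriv f x) z‖ ≤ C * ‖y - x‖ := by
    rintro z ⟨hzs, hzx⟩
    rw [(hlin z hzs).deriv]
    calc ‖deriv f z - deriv f x‖ ≤ C * ‖z - x‖ :=
          hs.norm_image_sub_le_of_norm_deriv_le hf' hC hx hzs
      _ ≤ C * ‖y - x‖ := by gcongr; rwa [← dist_eq_norm]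
  have := (hs.inter (convex_closedBall x ‖y - x‖)).norm_image_sub_le_of_norm_deriv_le
    (fun z hz => (hlin z hz.1).differentiableAt) hbound ⟨hx, mem_closedBall_self (norm_nonneg _)⟩
    ⟨hy, by rw [mem_closedBall, dist_eq_norm]⟩
  rw [sq, ← mul_assoc]
  convert this using 2
  rw [sub_smul]; abel

theorem Complex.exists_exp_mul_one_add_eq_one {φ g : ℂ → ℂ} {a : ℂ} {r ε : ℝ} (hr : 0 < r)
    (hε : 0 < ε) (hφ : DifferentiableOn ℂ φ (closedBall a r))
    (hg : DifferentiableOn ℂ g (closedBall a r)) (hφa : φ a = 0)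
    (hφ_le : ∀ z ∈ sphere a r, ‖φ z‖ ≤ 1 / 2) (hφ_ge : ∀ z ∈ sphere a r, 10 * ε ≤ ‖φ z‖)
    (hg_le : ∀ z ∈ closedBall a r, ‖g z‖ ≤ ε) :
    ∃ z ∈ closedBall a r, exp (φ z) * (1 + g z) = 1 := by
  have hcl : closure (ball a r) = closedBall a r := closure_ball a hr.ne'
  have hF : DifferentiableOn ℂ (fun z => exp (φ z) * (1 + g z) - 1) (closedBall a r) :=
    (hφ.cexp.mul ((differentiableOn_const 1).add hg)).sub_const 1
  have hsphere : ∀ z ∈ frontier (ball a r), 2 * ε ≤ ‖exp (φ z) * (1 + g z) - 1‖ := by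
    intro z hz
    rw [frontier_ball a hr.ne'] at hz
    linarith [norm_div_two_sub_le_norm_exp_mul_one_add_sub_one (w := g z) (hφ_le z hz), hφ_ge z hz,
      hg_le z (sphere_subset_closedBall hz)]
  have hcenter : ‖exp (φ a) * (1 + g a) - 1‖ < 2 * ε := by
    rw [hφa, exp_zero, one_mul, add_sub_cancel_left]
    linarith [hg_le a (mem_closedBall_self hr.le)]
  rw [← hcl] at hF ⊢
  simpa only [sub_eq_zero] using
    exists_eq_zero_of_norm_lt_of_forall_mem_frontier isBounded_ball hF hsphere
    (hcl ▸ mem_closedBall_self hr.le) hcenter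

theorem exists_exp_I_mul_sub_div_mul_one_add_eq_one {S g : ℂ → ℂ} {a : ℂ} {ρ c C1 C2 h r ε : ℝ}
    (hS : DifferentiableOn ℂ S (ball a ρ)) (hc : c ≤ ‖deriv S a‖) (hC1 : ‖deriv S a‖ ≤ C1)
    (hS'' : ∀ z ∈ ball a ρ, ‖deriv (deriv S) z‖ ≤ C2)
    (hg : DifferentiableOn ℂ g (ball a ρ)) (hgε : ∀ z ∈ ball a ρ, ‖g z‖ ≤ ε)
    (hh : 0 < h) (hr : 0 < r) (hε : 0 < ε) (hrρ : r < ρ) (hC2r : C2 * r ≤ c / 2)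
    (hC1r : (C1 + c / 2) * r ≤ h / 2) (hεr : 20 * h * ε ≤ c * r) :
    ∃ z ∈ closedBall a r, exp (I * (S z - S a) / h) * (1 + g z) = 1 := by
  have hsub : closedBall a r ⊆ ball a ρ := closedBall_subset_ball hrρ
  have ha : a ∈ ball a ρ := mem_ball_self (hr.trans hrρ)
  have hSan := hS.analyticOnNhd isOpen_ball
  have hphase : ∀ z ∈ sphere a r, c / 2 * r ≤ ‖S z - S a‖ ∧ ‖S z - S a‖ ≤ h / 2 := by
    intro z hz
    have hza : ‖z - a‖ = r := by rwa [← dist_eq_norm, ← mem_sphere]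
    have htaylor := (convex_ball a ρ).norm_image_sub_sub_smul_deriv_le
      (fun w hw => (hSan w hw).differentiableAt) (fun w hw => (hSan.deriv w hw).differentiableAt)
      hS'' ha (hsub (sphere_subset_closedBall hz))
    rw [smul_eq_mul, hza] at htaylor
    have hlin : ‖(z - a) * deriv S a‖ = r * ‖deriv S a‖ := by rw [norm_mul, hza]
    have hle := norm_add_le (S z - S a - (z - a) * deriv S a) ((z - a) * deriv S a)
    have hge := norm_sub_le (S z - S a) (S z - S a - (z - a) * deriv S a)
    rw [sub_add_cancel] at hle
    rw [sub_sub_cancel] at hge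
    constructor <;> nlinarith
  have hnorm (z : ℂ) : ‖I * (S z - S a) / h‖ = ‖S z - S a‖ / h := by
    rw [norm_div, norm_mul, norm_I, one_mul, norm_real, Real.norm_of_nonneg hh.le]
  refine exists_exp_mul_one_add_eq_one hr hε
    (((hS.sub_const (S a)).const_mul I).div_const _ |>.mono hsub) (hg.mono hsub)
    (by simp) (fun z hz => ?_) (fun z hz => ?_) (fun z hz => hgε z (hsub hz))
  · rw [hnorm, div_le_iff₀ hh]
    linarith [(hphase z hz).2]
  · rw [hnorm, le_div_iff₀ hh]
    nlinarith [(hphase z hz).1]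

theorem Complex.mul_exp_div_eq_exp_sub {a b x y : ℂ} (h : a * exp x / b = 1) :
    a * exp y / b = exp (y - x) := by
  calc a * exp y / b = a * exp x / b * exp (y - x) := by
        rw [div_mul_eq_mul_div, mul_assoc, ← exp_add, add_sub_cancel]
    _ = exp (y - x) := by rw [h, one_mul]

theorem Real.tendsto_mul_log_one_div_nhdsGT_zero :
    Tendsto (fun h : ℝ => h * Real.log (1 / h)) (𝓝[>] 0) (𝓝 0) := by
  simpa [Real.log_inv] using (Real.continuous_mul_log.tendsto 0).neg.mono_left nhdsWithin_le_nhds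

theorem stmt_7_general (E0 v : ℝ) (W0 : ℂ) (c C1 C2 ρ K : ℝ)
    (hc : 0 < c) (hρ : 0 < ρ) (hK : 0 < K) :
    ∃ A > 0, ∃ h0 ∈ Set.Ioo (0:ℝ) 1, ∀ h : ℝ, h ∈ Set.Ioo 0 h0 →
      ∀ E1 : ℂ, ∀ S g : ℂ → ℂ,
      DifferentiableOn ℂ S (Metric.ball E1 ρ) →
      (∀ E ∈ Metric.ball E1 ρ, c ≤ ‖deriv S E‖ ∧ ‖deriv S E‖ ≤ C1) →
      (∀ E ∈ Metric.ball E1 ρ, ‖deriv (deriv S) E‖ ≤ C2) →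
      Complex.I * h * Real.pi * W0 * Complex.exp (Complex.I * S E1 / h) / (v * Real.sqrt E0)
        = 1 →
      DifferentiableOn ℂ g (Metric.ball E1 ρ) →
      (∀ E ∈ Metric.ball E1 ρ, ‖g E‖ ≤ K * h * Real.log (1 / h)) →
      ∃ E : ℂ, ‖E - E1‖ ≤ A * h ^ 2 * Real.log (1 / h) ∧
        Complex.I * h * Real.pi * W0 * Complex.exp (Complex.I * S E / h) /
          (v * Real.sqrt E0) * (1 + g E) = 1 := by
  obtain ⟨A, hA⟩ : ∃ A, A = 20 * K / c := ⟨_, rfl⟩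
  have hApos : 0 < A := hA ▸ by positivity
  have hη := Real.tendsto_mul_log_one_div_nhdsGT_zero.const_mul A
  rw [mul_zero] at hη
  have hsmall (B M : ℝ) (hM : 0 < M) :
      ∀ᶠ h in 𝓝[>] (0 : ℝ), B * (A * (h * Real.log (1 / h))) < M :=
    (hη.const_mul B).eventually_lt_const (by rwa [mul_zero])
  obtain ⟨h0, ⟨h0pos, h0le⟩, hh0⟩ := (mem_nhdsGT_iff_exists_mem_Ioc_Ioo_subset one_half_pos).mp
    ((hη.eventually_lt_const hρ).and ((hsmall C2 (c / 2) (by positivity)).and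
      (hsmall (C1 + c / 2) (1 / 2) one_half_pos)))
  refine ⟨A, hApos, h0, ⟨h0pos, by linarith⟩, ?_⟩
  intro h hh E1 S g hS hS' hS'' hC0 hg hgb
  obtain ⟨hρ', hC2', hC1'⟩ := hh0 hh
  obtain ⟨hh_pos, hh_lt⟩ := hh
  have hh1 : h < 1 := by linarith
  have hL : 0 < Real.log (1 / h) := Real.log_pos (one_lt_one_div hh_pos hh1)
  have hAη : 0 < A * (h * Real.log (1 / h)) := by positivity
  have hr : A * h ^ 2 * Real.log (1 / h) = h * (A * (h * Real.log (1 / h))) := by ring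
  have hC2 : 0 ≤ C2 := (norm_nonneg _).trans (hS'' E1 (mem_ball_self hρ))
  have hhAη := mul_le_of_le_one_left hAη.le hh1.le
  obtain ⟨E, hE, hEq⟩ := exists_exp_I_mul_sub_div_mul_one_add_eq_one
    (r := A * h ^ 2 * Real.log (1 / h)) (ε := K * h * Real.log (1 / h)) hS
    (hS' E1 (mem_ball_self hρ)).1 (hS' E1 (mem_ball_self hρ)).2 hS'' hg hgb hh_pos
    (by positivity) (by positivity) (by rw [hr]; linarith) (by rw [hr]; nlinarith)
    (by rw [hr]; nlinarith) (le_of_eq (by rw [hA]; field_simp))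
  refine ⟨E, by rwa [← dist_eq_norm, ← mem_closedBall], ?_⟩
  rwa [Complex.mul_exp_div_eq_exp_sub hC0, ← sub_div, ← mul_sub]

/-- Rouché-type approximation of resonances by pseudo-resonances: there exist `A > 0` and
`h₀ ∈ (0,1)` depending only on `c, C₁, C₂, ρ, K` such that if `S` is holomorphic on `B(E₁,ρ)`
with `c ≤ |S'| ≤ C₁`, `|S''| ≤ C₂` there, `C₀(E₁;h) = 1`, and `g` is holomorphic on `B(E₁,ρ)`
with `|g| ≤ K h log(1/h)`, then `C₀(E;h)(1 + g(E)) = 1` has a solution `E` with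
`|E - E₁| ≤ A h² log(1/h)`. -/
theorem stmt_7 (E0 v : ℝ) (hE0 : 0 < E0) (hv : 0 < v)
    (W0 : ℂ) (hW0 : W0 ≠ 0) (c C1 C2 ρ K : ℝ)
    (hc : 0 < c) (hC1 : 0 < C1) (hC2 : 0 < C2) (hρ : 0 < ρ) (hK : 0 < K) :
    ∃ A > 0, ∃ h0 ∈ Set.Ioo (0:ℝ) 1, ∀ h : ℝ, h ∈ Set.Ioo 0 h0 →
      ∀ E1 : ℂ, ∀ S g : ℂ → ℂ,
      DifferentiableOn ℂ S (Metric.ball E1 ρ) →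
      (∀ E ∈ Metric.ball E1 ρ, c ≤ ‖deriv S E‖ ∧ ‖deriv S E‖ ≤ C1) →
      (∀ E ∈ Metric.ball E1 ρ, ‖deriv (deriv S) E‖ ≤ C2) →
      Complex.I * h * Real.pi * W0 * Complex.exp (Complex.I * S E1 / h) / (v * Real.sqrt E0)
        = 1 →
      DifferentiableOn ℂ g (Metric.ball E1 ρ) →
      (∀ E ∈ Metric.ball E1 ρ, ‖g E‖ ≤ K * h * Real.log (1 / h)) →
      ∃ E : ℂ, ‖E - E1‖ ≤ A * h ^ 2 * Real.log (1 / h) ∧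
        Complex.I * h * Real.pi * W0 * Complex.exp (Complex.I * S E / h) /
          (v * Real.sqrt E0) * (1 + g E) = 1 :=
  stmt_7_general E0 v W0 c C1 C2 ρ K hc hρ hK
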